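/- In a binary nearly stable network, if c is a tree vertex that is a parent of an unstable reticulation a, then the child of c other than a is stable and is not a reticulation. -/

import Mathlib

/-!
Common framework: a binary phylogenetic network is modelled as a directed graph
on an ambient type `V`, given by a vertex set `verts : Set V`, an adjacency
relation `adj : V → V → Prop` (no parallel edges are possible in this model),
and a root vertex `root`.
-/

/-- The outdegree of a vertex `v`: the number of its out-neighbours. -/
noncomputable def outdeg {V : Type*} (adj : V → V → Prop) (v : V) : ℕ :=
  {u | adj v u}.ncard

/-- The indegree of a vertex `v`: the number of its in-neighbours. -/
noncomputable def indeg {V : Type*} (adj : V → V → Prop) (v : V) : ℕ :=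
  {u | adj u v}.ncard

/-- A leaf of the network: a vertex with outdegree 0. -/
def IsLeaf {V : Type*} (verts : Set V) (adj : V → V → Prop) (v : V) : Prop :=
  v ∈ verts ∧ outdeg adj v = 0

/-- A tree vertex: indegree 1 and outdegree 2. -/
def IsTreeVertex {V : Type*} (adj : V → V → Prop) (v : V) : Prop :=
  indeg adj v = 1 ∧ outdeg adj v = 2

/-- A reticulation: indegree 2 and outdegree 1. -/
def IsReticulation {V : Type*} (adj : V → V → Prop) (v : V) : Prop :=
  indeg adj v = 2 ∧ outdeg adj v = 1

/-- `l` is a directed path from `a` to `b`: a nonempty list of vertices starting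
at `a`, ending at `b`, each consecutive pair joined by an edge. -/
def IsPathFromTo {V : Type*} (adj : V → V → Prop) (l : List V) (a b : V) : Prop :=
  l.Chain' adj ∧ l.head? = some a ∧ l.getLast? = some b

/-- A binary phylogenetic network: a finite DAG with a unique root (the only
vertex of indegree 0) of outdegree 2, in which every vertex is reachable from
the root, every leaf has indegree 1, and every other non-root vertex is either
a tree vertex or a reticulation. -/
structure IsBinaryNetwork {V : Type*} (verts : Set V) (adj : V → V → Prop) (root : V) : Prop where
  finite_verts : verts.Finite
  root_mem : root ∈ verts
  adj_mem : ∀ ⦃u v : V⦄, adj u v → u ∈ verts ∧ v ∈ verts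
  acyclic : ∀ v : V, ¬ Relation.TransGen adj v v
  root_indeg : indeg adj root = 0
  root_outdeg : outdeg adj root = 2
  root_unique : ∀ v ∈ verts, indeg adj v = 0 → v = root
  reach : ∀ v ∈ verts, Relation.ReflTransGen adj root v
  leaf_indeg : ∀ v ∈ verts, outdeg adj v = 0 → indeg adj v = 1
  internal_deg : ∀ v ∈ verts, v ≠ root → outdeg adj v ≠ 0 →
      IsTreeVertex adj v ∨ IsReticulation adj v

/-- `x` is stable: there is a leaf `ℓ` such that `x` lies on every directed
path from the root to `ℓ`. -/
def Stable {V : Type*} (verts : Set V) (adj : V → V → Prop) (root x : V) : Prop :=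
  ∃ ℓ, IsLeaf verts adj ℓ ∧ ∀ l : List V, IsPathFromTo adj l root ℓ → x ∈ l

/-- A network is reticulation-visible if every reticulation is stable. -/
def ReticulationVisible {V : Type*} (verts : Set V) (adj : V → V → Prop) (root : V) : Prop :=
  ∀ v ∈ verts, IsReticulation adj v → Stable verts adj root v

/-- A network is nearly stable if every vertex is stable or all of its parents
are stable. -/
def NearlyStable {V : Type*} (verts : Set V) (adj : V → V → Prop) (root : V) : Prop :=
  ∀ v ∈ verts, Stable verts adj root v ∨ ∀ p : V, adj p v → Stable verts adj root p

/-!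
Say that `x` dominates `y` if `x` lies on every path from the root to `y`; a vertex is stable
iff it dominates a leaf. Near-stability makes both parents `c`, `c'` of the unstable
reticulation `a` stable, and also its child `b`; let `c` dominate the leaf `ℓ`.

If `a` reaches `ℓ`, a path `c' → a → ⋯ → ℓ` avoids `c`, so `c` dominates `c'`; as `a` cannot
reach its own parent `c'`, every root path to `c'` leaves `c` through `d`, so `d` dominates the
stable `c'`. Otherwise every root path to `ℓ` leaves `c` through `d`, so `d` dominates `ℓ`.

If `d` had a parent `e ≠ c`, then `c` would dominate `e`, because `d` reaches `ℓ`. For `e = a`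
the first case applies and closes the cycle `a → d → ⋯ → c' → a`. For `e ≠ a`, `a` would
dominate `e`, hence also its child `b`, which would make `a` stable.
-/

namespace IsPathFromTo

variable {V : Type*} {adj : V → V → Prop} {l m : List V} {a b u x : V}

theorem exists_eq_cons (h : IsPathFromTo adj l a b) : ∃ t, l = a :: t := by
  obtain ⟨_, hhead, _⟩ := h
  cases l with
  | nil => simp at hhead
  | cons y t => exact ⟨t, by simpa using hhead⟩

theorem head_mem (h : IsPathFromTo adj l a b) : a ∈ l := by
  obtain ⟨t, rfl⟩ := h.exists_eq_cons
  exact List.mem_cons_self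

theorem singleton (x : V) : IsPathFromTo adj [x] x x :=
  ⟨.singleton x, rfl, rfl⟩

theorem cons (hau : adj a u) (h : IsPathFromTo adj l u b) : IsPathFromTo adj (a :: l) a b := by
  obtain ⟨t, rfl⟩ := h.exists_eq_cons
  exact ⟨h.1.cons_cons hau, rfl, by rw [List.getLast?_cons_cons]; exact h.2.2⟩

theorem exists_of_reflTransGen (h : Relation.ReflTransGen adj a b) :
    ∃ l, IsPathFromTo adj l a b := by
  induction h using Relation.ReflTransGen.head_induction_on with
  | refl => exact ⟨_, singleton b⟩
  | head hau _ ih =>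
    obtain ⟨l, hl⟩ := ih
    exact ⟨_, hl.cons hau⟩

theorem append (h₁ : IsPathFromTo adj l a u) (h₂ : IsPathFromTo adj m u b) :
    IsPathFromTo adj (l ++ m.tail) a b := by
  obtain ⟨t, rfl⟩ := h₂.exists_eq_cons
  obtain ⟨hl, hla, hlu⟩ := h₁
  obtain ⟨ht, -, htb⟩ := h₂
  refine ⟨hl.append ht.tail ?_, ?_, ?_⟩
  · simp only [hlu, Option.mem_def, Option.some.injEq, forall_eq']
    exact fun y hy => ht.rel_head? hy
  · simp [List.head?_append, hla]
  · cases t with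
    | nil => simpa [hlu] using htb
    | cons y t => simpa [List.getLast?_append] using htb

theorem exists_prefix (h : IsPathFromTo adj l a b) (hx : x ∈ l) :
    ∃ m, IsPathFromTo adj m a x ∧ m <+: l := by
  obtain ⟨s, t, rfl⟩ := List.append_of_mem hx
  refine ⟨s ++ [x], ⟨h.1.prefix ⟨t, by simp⟩, ?_, by simp⟩, ⟨t, by simp⟩⟩
  simpa [List.head?_append] using h.2.1

theorem exists_suffix (h : IsPathFromTo adj l a b) (hx : x ∈ l) :
    ∃ m, IsPathFromTo adj m x b ∧ m <:+ l := by
  obtain ⟨s, t, rfl⟩ := List.append_of_mem hx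
  refine ⟨x :: t, ⟨h.1.suffix ⟨s, rfl⟩, rfl, ?_⟩, ⟨s, rfl⟩⟩
  simpa [List.getLast?_append] using h.2.2

theorem exists_adj_of_ne (h : IsPathFromTo adj l a b) (hab : a ≠ b) :
    ∃ y, adj a y ∧ IsPathFromTo adj l.tail y b := by
  obtain ⟨t, rfl⟩ := h.exists_eq_cons
  cases t with
  | nil => exact absurd (by simpa using h.2.2) hab
  | cons y t =>
    obtain ⟨hc, -, hlast⟩ := h
    obtain ⟨hay, hc⟩ := List.isChain_cons_cons.mp hc
    exact ⟨y, hay, hc, rfl, by rwa [List.getLast?_cons_cons] at hlast⟩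

theorem reflTransGen (h : IsPathFromTo adj l a b) : Relation.ReflTransGen adj a b := by
  induction l generalizing a with
  | nil => simp [IsPathFromTo] at h
  | cons y t ih =>
    by_cases hab : a = b
    · exact hab ▸ .refl
    · obtain ⟨z, haz, hz⟩ := h.exists_adj_of_ne hab
      exact .head haz (ih hz)

theorem reflTransGen_of_mem (h : IsPathFromTo adj l a b) (hx : x ∈ l) :
    Relation.ReflTransGen adj a x :=
  let ⟨_, hm, _⟩ := h.exists_prefix hx
  hm.reflTransGen

end IsPathFromTo

section Degrees

variable {V : Type*} {adj : V → V → Prop} {a c d y : V}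

theorem eq_or_eq_of_outdeg_eq_two (h : outdeg adj c = 2) (hca : adj c a) (hcd : adj c d)
    (had : a ≠ d) (hcy : adj c y) : y = a ∨ y = d := by
  have h' : {u | adj c u}.ncard = 2 := h
  have hpair : ({a, d} : Set V) = {u | adj c u} :=
    Set.eq_of_subset_of_ncard_le (Set.pair_subset hca hcd) (by rw [h', Set.ncard_pair had])
      (Set.finite_of_ncard_ne_zero (by omega))
  have hy : y ∈ {u | adj c u} := hcy
  simpa [← hpair] using hy

theorem existsUnique_adj_of_outdeg_eq_one (h : outdeg adj a = 1) : ∃! b, adj a b := by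
  obtain ⟨b, hb⟩ := Set.ncard_eq_one.mp h
  refine ⟨b, ?_, fun y hy => ?_⟩
  · change b ∈ {u | adj a u}
    simp [hb]
  · change y ∈ {u | adj a u} at hy
    simpa [hb] using hy

theorem exists_adj_ne_of_indeg_eq_two (h : indeg adj a = 2) (c : V) : ∃ c', adj c' a ∧ c' ≠ c :=
  Set.exists_ne_of_one_lt_ncard (show 1 < indeg adj a by omega) c

end Degrees

namespace IsBinaryNetwork

variable {V : Type*} {verts : Set V} {adj : V → V → Prop} {root : V} {l : List V} {u v x : V}

theorem not_reflTransGen_of_adj (hN : IsBinaryNetwork verts adj root) (huv : adj u v) :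
    ¬ Relation.ReflTransGen adj v u :=
  fun hvu => hN.acyclic u (.head' huv hvu)

theorem not_mem_of_adj (hN : IsBinaryNetwork verts adj root) (hxu : adj x u)
    (hl : IsPathFromTo adj l u v) : x ∉ l :=
  fun hx => hN.not_reflTransGen_of_adj hxu (hl.reflTransGen_of_mem hx)

end IsBinaryNetwork

def Dominates {V : Type*} (adj : V → V → Prop) (root x y : V) : Prop :=
  ∀ l : List V, IsPathFromTo adj l root y → x ∈ l

namespace Dominates

variable {V : Type*} {adj : V → V → Prop} {root : V} {m : List V} {x y z : V}

theorem trans (hxy : Dominates adj root x y) (hyz : Dominates adj root y z) :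
    Dominates adj root x z := fun l hl =>
  let ⟨_, hm, hml⟩ := hl.exists_prefix (hyz l hl)
  hml.subset (hxy _ hm)

theorem of_isPathFromTo (hxz : Dominates adj root x z) (hm : IsPathFromTo adj m y z)
    (hxm : x ∉ m) : Dominates adj root x y := fun _ hl =>
  (List.mem_append.mp (hxz _ (hl.append hm))).resolve_right
    fun hx => hxm (List.mem_of_mem_tail hx)

theorem reflTransGen (hxz : Dominates adj root x z) (hz : Relation.ReflTransGen adj root z) :
    Relation.ReflTransGen adj x z :=
  let ⟨_, hl⟩ := IsPathFromTo.exists_of_reflTransGen hz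
  let ⟨_, hm, _⟩ := hl.exists_suffix (hxz _ hl)
  hm.reflTransGen

theorem exists_adj_mem (hxz : Dominates adj root x z) (hne : x ≠ z) {l : List V}
    (hl : IsPathFromTo adj l root z) :
    ∃ y, adj x y ∧ y ∈ l ∧ Relation.ReflTransGen adj y z := by
  obtain ⟨m, hm, hml⟩ := hl.exists_suffix (hxz l hl)
  obtain ⟨y, hxy, hy⟩ := hm.exists_adj_of_ne hne
  exact ⟨y, hxy, hml.subset (List.mem_of_mem_tail hy.head_mem), hy.reflTransGen⟩

theorem of_forall_adj (hxz : Dominates adj root x z) (hne : x ≠ z)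
    (hy : ∀ y', adj x y' → Relation.ReflTransGen adj y' z → y' = y) : Dominates adj root y z :=
  fun _ hl =>
  let ⟨_, hxy', hy'l, hy'z⟩ := hxz.exists_adj_mem hne hl
  hy _ hxy' hy'z ▸ hy'l

end Dominates

theorem Stable.of_dominates {V : Type*} {verts : Set V} {adj : V → V → Prop} {root x y : V}
    (hy : Stable verts adj root y) (hxy : Dominates adj root x y) : Stable verts adj root x :=
  let ⟨ℓ, hℓ, hyℓ⟩ := hy
  ⟨ℓ, hℓ, hxy.trans hyℓ⟩

namespace NearlyStable

variable {V : Type*} {verts : Set V} {adj : V → V → Prop} {root p v : V}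

theorem stable_of_adj (hNS : NearlyStable verts adj root) (hv : v ∈ verts) (hpv : adj p v)
    (hnv : ¬ Stable verts adj root v) : Stable verts adj root p :=
  (hNS v hv).resolve_left hnv p hpv

theorem stable_of_adj_not_stable (hNS : NearlyStable verts adj root) (hv : v ∈ verts)
    (hpv : adj p v) (hnp : ¬ Stable verts adj root p) : Stable verts adj root v :=
  (hNS v hv).resolve_right fun h => hnp (h p hpv)

end NearlyStable

section TreeVertexAboveReticulation

variable {V : Type*} {verts : Set V} {adj : V → V → Prop} {root : V} {a b c c' d e ℓ : V}

theorem dominates_other_parent_of_reflTransGen (hN : IsBinaryNetwork verts adj root)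
    (hca : adj c a) (hchild : ∀ y, adj c y → y = a ∨ y = d) (hc'a : adj c' a) (hc'c : c' ≠ c)
    (hcℓ : Dominates adj root c ℓ) (haℓ : Relation.ReflTransGen adj a ℓ) :
    Dominates adj root d c' := by
  obtain ⟨W, hW⟩ := IsPathFromTo.exists_of_reflTransGen haℓ
  have hcc' : Dominates adj root c c' :=
    hcℓ.of_isPathFromTo (hW.cons hc'a) (by simp [hc'c.symm, hN.not_mem_of_adj hca hW])
  refine hcc'.of_forall_adj hc'c.symm fun y hcy hyc' => ?_
  rcases hchild y hcy with rfl | rfl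
  · exact absurd hyc' (hN.not_reflTransGen_of_adj hc'a)
  · rfl

theorem reflTransGen_other_child (hchild : ∀ y, adj c y → y = a ∨ y = d)
    (hcℓ : Dominates adj root c ℓ) (hcℓ_ne : c ≠ ℓ) (haℓ : ¬ Dominates adj root a ℓ) :
    Relation.ReflTransGen adj d ℓ := by
  obtain ⟨Q, hQ, haQ⟩ : ∃ Q, IsPathFromTo adj Q root ℓ ∧ a ∉ Q := by
    simpa [Dominates] using haℓ
  obtain ⟨y, hcy, hyQ, hyℓ⟩ := hcℓ.exists_adj_mem hcℓ_ne hQ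
  rcases hchild y hcy with rfl | rfl
  · exact absurd hyQ haQ
  · exact hyℓ

theorem stable_other_child (hN : IsBinaryNetwork verts adj root)
    (hca : adj c a) (hchild : ∀ y, adj c y → y = a ∨ y = d) (hc'a : adj c' a) (hc'c : c' ≠ c)
    (hc'_stable : Stable verts adj root c') (hℓ : IsLeaf verts adj ℓ)
    (hcℓ : Dominates adj root c ℓ) (hcℓ_ne : c ≠ ℓ) : Stable verts adj root d := by
  by_cases haℓ : Relation.ReflTransGen adj a ℓ
  · exact hc'_stable.of_dominates
      (dominates_other_parent_of_reflTransGen hN hca hchild hc'a hc'c hcℓ haℓ)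
  · refine ⟨ℓ, hℓ, hcℓ.of_forall_adj hcℓ_ne fun y hcy hyℓ => ?_⟩
    rcases hchild y hcy with rfl | rfl
    · exact absurd hyℓ haℓ
    · rfl

theorem eq_of_adj_other_child (hN : IsBinaryNetwork verts adj root)
    (hca : adj c a) (hcd : adj c d) (hchild : ∀ y, adj c y → y = a ∨ y = d)
    (hc'a : adj c' a) (hc'c : c' ≠ c) (hab_unique : ∀ y, adj a y → y = b)
    (ha : ¬ Stable verts adj root a) (hb_stable : Stable verts adj root b)
    (hℓ : IsLeaf verts adj ℓ) (hcℓ : Dominates adj root c ℓ) (hcℓ_ne : c ≠ ℓ)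
    (hed : adj e d) : e = c := by
  by_contra hec
  have hdℓ := reflTransGen_other_child hchild hcℓ hcℓ_ne fun h => ha ⟨ℓ, hℓ, h⟩
  obtain ⟨W, hW⟩ := IsPathFromTo.exists_of_reflTransGen hdℓ
  have hce : Dominates adj root c e :=
    hcℓ.of_isPathFromTo (hW.cons hed) (by simp [Ne.symm hec, hN.not_mem_of_adj hcd hW])
  by_cases hea : e = a
  · subst hea
    have hdc' :=
      dominates_other_parent_of_reflTransGen hN hca hchild hc'a hc'c hcℓ (.head hed hdℓ)
    have hdc'_reach := hdc'.reflTransGen (hN.reach c' (hN.adj_mem hc'a).1)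
    exact hN.not_reflTransGen_of_adj hed (hdc'_reach.tail hc'a)
  · have hae : Dominates adj root a e := hce.of_forall_adj (Ne.symm hec) fun y hcy hye => by
      rcases hchild y hcy with rfl | rfl
      · rfl
      · exact absurd hye (hN.not_reflTransGen_of_adj hed)
    obtain ⟨P, hP⟩ := IsPathFromTo.exists_of_reflTransGen (hN.reach e (hN.adj_mem hed).1)
    obtain ⟨y, hay, -, hye⟩ := hae.exists_adj_mem (Ne.symm hea) hP
    obtain rfl := hab_unique y hay
    obtain ⟨M, hM⟩ := IsPathFromTo.exists_of_reflTransGen hye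
    exact ha (hb_stable.of_dominates (hae.of_isPathFromTo hM (hN.not_mem_of_adj hay hM)))

end TreeVertexAboveReticulation

/-- In a binary nearly stable network, if `c` is a tree vertex that is a
parent of an unstable reticulation `a`, then the child of `c` other than `a`
is stable and is not a reticulation. -/
theorem other_child_of_parent_of_unstable_reticulation {V : Type*}
    (verts : Set V) (adj : V → V → Prop) (root : V)
    (hN : IsBinaryNetwork verts adj root) (hNS : NearlyStable verts adj root)
    (c a d : V) (hc : IsTreeVertex adj c)
    (ha : IsReticulation adj a) (hua : ¬ Stable verts adj root a)
    (hca : adj c a) (hcd : adj c d) (hda : d ≠ a) :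
    Stable verts adj root d ∧ ¬ IsReticulation adj d := by
  have hchild : ∀ y, adj c y → y = a ∨ y = d :=
    fun y => eq_or_eq_of_outdeg_eq_two hc.2 hca hcd (Ne.symm hda)
  obtain ⟨c', hc'a, hc'c⟩ := exists_adj_ne_of_indeg_eq_two ha.1 c
  obtain ⟨b, hab, hab_unique⟩ := existsUnique_adj_of_outdeg_eq_one ha.2
  have haV := (hN.adj_mem hca).2
  have hc'_stable := hNS.stable_of_adj haV hc'a hua
  obtain ⟨ℓ, hℓ, hcℓ⟩ := hNS.stable_of_adj haV hca hua
  have hcℓ_ne : c ≠ ℓ := fun h => by simpa [h, hℓ.2] using hc.2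
  have hb_stable := hNS.stable_of_adj_not_stable (hN.adj_mem hab).2 hab hua
  refine ⟨stable_other_child hN hca hchild hc'a hc'c hc'_stable hℓ hcℓ hcℓ_ne, fun hd => ?_⟩
  obtain ⟨e, hed, hec⟩ := exists_adj_ne_of_indeg_eq_two hd.1 c
  exact hec <| eq_of_adj_other_child hN hca hcd hchild hc'a hc'c hab_unique hua hb_stable
    hℓ hcℓ hcℓ_ne hed
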